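/- arXiv:2308.05503 — 7 statements merged into one kernel-verified Lean document; each statement's English description precedes it below -/
import Mathlib

section
/- Given a partial EFX allocation (A_1,…,A_n), a designated agent i, and an item g not in any bundle, suppose that adding g to A_i causes some agent to strongly envy A_i ∪ {g}. Then there exists a subset S ⊆ A_i ∪ {g} and an agent a such that (1) v_a(S) > v_a(A_a), and (2) for every agent j with v_j(A_i ∪ {g}) > v_j(A_j) and every s ∈ S, v_j(S \ {s}) ≤ v_j(A_j). (Safe bundle existence.) -/
open Finset

/-- safe bundle existence: for a partial EFX allocation, an agent `i`
and an unallocated item `g`, if adding `g` to `A i` makes some agent strongly envy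
`A i ∪ {g}`, then a safe bundle `S ⊆ A i ∪ {g}` and a maximal envious agent `a` exist. -/
theorem safe_bundle_exists {α : Type*} [DecidableEq α] (n : ℕ)
    (v : Fin n → Finset α → ℕ)
    (hnorm : ∀ i, v i ∅ = 0)
    (hmono : ∀ i, ∀ T S : Finset α, T ⊆ S → v i T ≤ v i S)
    (A : Fin n → Finset α)
    (hdisj : ∀ i j : Fin n, i ≠ j → Disjoint (A i) (A j))
    (hEFX : ∀ i j : Fin n, ∀ g' ∈ A j, v i ((A j).erase g') ≤ v i (A i))
    (i : Fin n) (g : α) (hg : ∀ j : Fin n, g ∉ A j)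
    (hstrong : ∃ j : Fin n, ∃ s ∈ insert g (A i),
      v j (A j) < v j ((insert g (A i)).erase s)) :
    ∃ S ⊆ insert g (A i), ∃ a : Fin n,
      v a (A a) < v a S ∧
      ∀ j : Fin n, v j (A j) < v j (insert g (A i)) →
        ∀ s ∈ S, v j (S.erase s) ≤ v j (A j) := by
  classical
  set T := (insert g (A i)).powerset.filter (fun S => ∃ a : Fin n, v a (A a) < v a S) with hT
  have hne : T.Nonempty := by
    obtain ⟨j, s, hs, hlt⟩ := hstrong
    exact ⟨(insert g (A i)).erase s, by
      simp only [hT, mem_filter, mem_powerset]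
      exact ⟨erase_subset _ _, j, hlt⟩⟩
  obtain ⟨S, hST, hmin⟩ := T.exists_min_image Finset.card hne
  simp only [hT, mem_filter, mem_powerset] at hST
  obtain ⟨hSsub, a, ha⟩ := hST
  refine ⟨S, hSsub, a, ha, fun j _ s hs => ?_⟩
  by_contra hlt
  push_neg at hlt
  have hmem : S.erase s ∈ T := by
    simp only [hT, mem_filter, mem_powerset]
    exact ⟨(erase_subset _ _).trans hSsub, j, hlt⟩
  have := hmin _ hmem
  have hc : (S.erase s).card < S.card := card_erase_lt_of_mem hs
  omega
end

section
/- Cycle-elimination preserves the EFX property: let (A_1,…,A_n) be an EFX (partial) allocation and let agents u_0, u_1, …, u_{k−1} form a cycle in the envy graph (v_{u_t}(A_{u_t}) < v_{u_t}(A_{u_{t+1 mod k}}) for all t). After reassigning bundle A_{u_{t+1 mod k}} to agent u_t for each t, the resulting allocation is still EFX. -/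
open Finset

/-- cycle-elimination preserves EFX. -/
theorem cycle_elimination_preserves_efx {α : Type*} [DecidableEq α] (n : ℕ)
    (v : Fin n → Finset α → ℕ) (A A' : Fin n → Finset α)
    (k : ℕ) (hk : 0 < k) (u : ℕ → Fin n)
    (hper : u k = u 0)
    (hinj : ∀ t1 < k, ∀ t2 < k, u t1 = u t2 → t1 = t2)
    (henvy : ∀ t < k, v (u t) (A (u t)) < v (u t) (A (u (t + 1))))
    (hshift : ∀ t < k, A' (u t) = A (u (t + 1)))
    (hfix : ∀ i : Fin n, (∀ t < k, i ≠ u t) → A' i = A i)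
    (hEFX : ∀ i j : Fin n, ∀ g ∈ A j, v i ((A j).erase g) ≤ v i (A i)) :
    ∀ i j : Fin n, ∀ g ∈ A' j, v i ((A' j).erase g) ≤ v i (A' i) := by
  intro i j g hg
  -- A' i is at least as valuable to i as A i
  have hi : v i (A i) ≤ v i (A' i) := by
    by_cases hi' : ∃ t, t < k ∧ i = u t
    · obtain ⟨t, ht, rfl⟩ := hi'
      rw [hshift t ht]
      exact le_of_lt (henvy t ht)
    · rw [hfix i (fun t ht hne => hi' ⟨t, ht, hne⟩)]
  -- A' j equals A j' for some j'
  have hj : ∃ j', A' j = A j' := by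
    by_cases hj' : ∃ t, t < k ∧ j = u t
    · obtain ⟨t, ht, rfl⟩ := hj'
      exact ⟨u (t + 1), hshift t ht⟩
    · exact ⟨j, hfix j (fun t ht hne => hj' ⟨t, ht, hne⟩)⟩
  obtain ⟨j', hj'⟩ := hj
  rw [hj'] at hg ⊢
  exact (hEFX i j' g hg).trans hi
end

section
/- Suppose in a directed graph G on a finite vertex set V of agents, every vertex is either a source (no incoming envy edge) or reachable along envy edges from a source, and for every source s there exists a vertex c (possibly c = s) with a maximal-envy edge c ⇢ s. Then the graph whose edges are the envy edges together with the maximal-envy edges contains a directed cycle passing through at least one source vertex. -/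
/-!
Every source `s` has a maximal envious agent `c ⇢ s`, and `c` is a source or is reached along
envy edges from one; so every source is reached, by a nonempty path of the combined graph, from a
source. With finitely many sources these backward paths must revisit a source, closing a cycle
through it, and a shortest such closed walk is a simple cycle.
-/

open Relation

section Walks

variable {α : Type*} {r : α → α → Prop}

def IsWalk (r : α → α → Prop) (k : ℕ) (u : ℕ → α) : Prop :=
  ∀ t < k, r (u t) (u (t + 1))

theorem IsWalk.cons {k : ℕ} {u : ℕ → α} {a : α} (hu : IsWalk r k u) (ha : r a (u 0)) :
    IsWalk r (k + 1) (fun | 0 => a | t + 1 => u t) := by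
  rintro (_ | t) ht
  · exact ha
  · exact hu t (by omega)

theorem IsWalk.exists_splice {k t₁ t₂ : ℕ} {u : ℕ → α} (hu : IsWalk r k u) (h₁₂ : t₁ ≤ t₂)
    (h₂ : t₂ ≤ k) (heq : u t₁ = u t₂) :
    ∃ v : ℕ → α, IsWalk r (k - (t₂ - t₁)) v ∧ v 0 = u 0 ∧ v (k - (t₂ - t₁)) = u k := by
  refine ⟨fun t => if t < t₁ then u t else u (t + (t₂ - t₁)), ?_, ?_, ?_⟩
  · intro t ht
    by_cases hlt : t + 1 < t₁
    · simpa only [hlt, show t < t₁ by omega, if_true] using hu t (by omega)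
    by_cases hle : t < t₁
    · have ht₁ : t + 1 = t₁ := by omega
      simpa only [hle, hlt, if_true, if_false, ht₁, lt_irrefl,
        show t₁ + (t₂ - t₁) = t₂ by omega, ← heq] using hu t (by omega)
    · simpa only [hle, hlt, if_false, show t + 1 + (t₂ - t₁) = t + (t₂ - t₁) + 1 by omega]
        using hu (t + (t₂ - t₁)) (by omega)
  · rcases Nat.eq_zero_or_pos t₁ with rfl | hpos
    · simp [heq]
    · simp [hpos]
  · simp only [show ¬ k - (t₂ - t₁) < t₁ by omega, if_false,
      show k - (t₂ - t₁) + (t₂ - t₁) = k by omega]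

theorem exists_isWalk_of_reflTransGen {a b : α} (h : ReflTransGen r a b) :
    ∃ k u, IsWalk r k u ∧ u 0 = a ∧ u k = b := by
  induction h using ReflTransGen.head_induction_on with
  | refl => exact ⟨0, fun _ => b, fun t ht => absurd ht t.not_lt_zero, rfl, rfl⟩
  | head hac _ ih =>
    obtain ⟨k, u, hu, h0, hk⟩ := ih
    exact ⟨k + 1, _, hu.cons (h0 ▸ hac), rfl, hk⟩

theorem exists_isWalk_of_transGen {a b : α} (h : TransGen r a b) :
    ∃ k, 0 < k ∧ ∃ u, IsWalk r k u ∧ u 0 = a ∧ u k = b := by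
  obtain ⟨c, hac, hcb⟩ := TransGen.head'_iff.mp h
  obtain ⟨k, u, hu, h0, hk⟩ := exists_isWalk_of_reflTransGen hcb
  exact ⟨k + 1, k.succ_pos, _, hu.cons (h0 ▸ hac), rfl, hk⟩

theorem exists_simple_closed_walk_of_transGen {a : α} (h : TransGen r a a) :
    ∃ k u, 0 < k ∧ (∀ t₁ < k, ∀ t₂ < k, u t₁ = u t₂ → t₁ = t₂) ∧
      IsWalk r k u ∧ u 0 = a ∧ u k = a := by
  classical
  have hex := exists_isWalk_of_transGen h
  obtain ⟨hpos, u, hu, h0, hk⟩ := Nat.find_spec hex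
  refine ⟨Nat.find hex, u, hpos, ?_, hu, h0, hk⟩
  intro t₁ h₁ t₂ h₂ heq
  by_contra hne
  wlog hlt : t₁ < t₂ generalizing t₁ t₂
  · exact this t₂ h₂ t₁ h₁ heq.symm (Ne.symm hne) (by omega)
  obtain ⟨v, hv, hv0, hvk⟩ := hu.exists_splice hlt.le h₂.le heq
  exact Nat.find_min hex (by omega : Nat.find hex - (t₂ - t₁) < Nat.find hex)
    ⟨by omega, v, hv, hv0.trans h0, hvk.trans hk⟩

theorem Finite.exists_transGen_self [Finite α] [Nonempty α] (h : ∀ b, ∃ a, r a b) :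
    ∃ a, TransGen r a a := by
  by_contra! hirr
  have : Std.Irrefl (TransGen r) := ⟨hirr⟩
  obtain ⟨a, -, hmin⟩ :=
    (Finite.wellFounded_of_trans_of_irrefl (TransGen r)).has_min Set.univ Set.univ_nonempty
  obtain ⟨b, hb⟩ := h a
  exact hmin b trivial (.single hb)

end Walks

section EnvyGraph

variable {V : Type*} {E E' : V → V → Prop}

def IsSource (E : V → V → Prop) (x : V) : Prop :=
  ∀ y, ¬ E y x

theorem exists_source_transGen_of_isSource
    (hreach : ∀ x, IsSource E x ∨ ∃ s, IsSource E s ∧ ReflTransGen E s x)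
    (hmax : ∀ s, IsSource E s → ∃ c, E' c s) {s : V} (hs : IsSource E s) :
    ∃ s', IsSource E s' ∧ TransGen (fun a b => E a b ∨ E' a b) s' s := by
  obtain ⟨c, hc⟩ := hmax s hs
  rcases hreach c with hc_src | ⟨s', hs', hs'c⟩
  · exact ⟨c, hc_src, .single (.inr hc)⟩
  · exact ⟨s', hs', .tail' (ReflTransGen.mono (fun _ _ => .inl) _ _ hs'c) (.inr hc)⟩

theorem exists_source_transGen_self [Finite V] [Nonempty V]
    (hreach : ∀ x, IsSource E x ∨ ∃ s, IsSource E s ∧ ReflTransGen E s x)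
    (hmax : ∀ s, IsSource E s → ∃ c, E' c s) :
    ∃ s, IsSource E s ∧ TransGen (fun a b => E a b ∨ E' a b) s s := by
  obtain ⟨s₀, hs₀⟩ : ∃ s, IsSource E s := by
    obtain ⟨x⟩ := ‹Nonempty V›
    rcases hreach x with hx | ⟨s, hs, -⟩
    exacts [⟨x, hx⟩, ⟨s, hs⟩]
  have : Nonempty {s // IsSource E s} := ⟨⟨s₀, hs₀⟩⟩
  obtain ⟨⟨s, hs⟩, hcycle⟩ := Finite.exists_transGen_self
    (r := fun a b : {s // IsSource E s} => TransGen (fun a b => E a b ∨ E' a b) a b)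
    fun ⟨_, hs⟩ =>
      let ⟨s', hs', hpath⟩ := exists_source_transGen_of_isSource hreach hmax hs
      ⟨⟨s', hs'⟩, hpath⟩
  exact ⟨s, hs, TransGen.lift' Subtype.val (fun _ _ h => h) _ _ hcycle⟩

end EnvyGraph

/-- if every vertex is a source (no incoming envy edge) or reachable
from a source along envy edges, and every source has an incoming maximal-envy edge,
then envy edges together with maximal-envy edges contain a directed cycle passing
through at least one source. -/
theorem envy_graph_cycle_through_source {V : Type*} [Fintype V]
    (E E' : V → V → Prop)
    (hreach : ∀ x : V, (∀ y : V, ¬ E y x) ∨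
      ∃ s : V, (∀ y : V, ¬ E y s) ∧ Relation.ReflTransGen E s x)
    (hmax : ∀ s : V, (∀ y : V, ¬ E y s) → ∃ c : V, E' c s)
    (hne : Nonempty V) :
    ∃ (k : ℕ) (u : ℕ → V), 0 < k ∧
      (∀ t1 < k, ∀ t2 < k, u t1 = u t2 → t1 = t2) ∧
      (∀ t < k, E (u t) (u (t + 1)) ∨ E' (u t) (u (t + 1))) ∧
      u k = u 0 ∧
      ∃ t < k, ∀ y : V, ¬ E y (u t) := by
  obtain ⟨s, hs, hcycle⟩ := exists_source_transGen_self hreach hmax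
  obtain ⟨k, u, hpos, hinj, hwalk, h0, hk⟩ := exists_simple_closed_walk_of_transGen hcycle
  exact ⟨k, u, hpos, hinj, hwalk, hk.trans h0.symm, 0, hpos, h0 ▸ hs⟩
end

section
/- With binary valuations, if a partial EFX allocation has a source agent i (no agent envies A_i) and adding unallocated item g to A_i causes agent j to strongly envy A_i ∪ {g}, then v_j(A_j) = v_j(A_i); i.e., j pre-envies i. -/
open Finset

/-- with binary valuations, if `i` is a source agent of a partial EFX
allocation and adding unallocated item `g` to `A i` makes `j` strongly envy
`A i ∪ {g}`, then `j` pre-envies `i`: `v j (A j) = v j (A i)`. -/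
theorem strong_envier_pre_envies_source {α : Type*} [DecidableEq α] (n : ℕ)
    (v : Fin n → Finset α → ℕ)
    (hbin : ∀ i : Fin n, v i ∅ = 0 ∧ ∀ (S : Finset α), ∀ g ∉ S,
      v i (insert g S) = v i S ∨ v i (insert g S) = v i S + 1)
    (A : Fin n → Finset α)
    (hEFX : ∀ i j : Fin n, ∀ g' ∈ A j, v i ((A j).erase g') ≤ v i (A i))
    (i : Fin n)
    (hsource : ∀ j : Fin n, ¬ v j (A j) < v j (A i))
    (g : α) (hg : ∀ j : Fin n, g ∉ A j)
    (j : Fin n)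
    (hstrong : ∃ s ∈ insert g (A i), v j (A j) < v j ((insert g (A i)).erase s)) :
    v j (A j) = v j (A i) := by
  obtain ⟨s, hs, hlt⟩ := hstrong
  rcases Finset.mem_insert.mp hs with rfl | hsA
  · rw [Finset.erase_insert (hg i)] at hlt
    exact absurd hlt (hsource j)
  · have hne : s ≠ g := fun h => hg i (h ▸ hsA)
    have herase : (insert g (A i)).erase s = insert g ((A i).erase s) := by
      rw [Finset.erase_insert_of_ne hne.symm]
    rw [herase] at hlt
    have hgn : g ∉ (A i).erase s := fun h => hg i (Finset.mem_of_mem_erase h)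
    have h1 : v j (insert g ((A i).erase s)) ≤ v j ((A i).erase s) + 1 := by
      rcases (hbin j).2 ((A i).erase s) g hgn with h | h <;> omega
    have h2 : v j ((A i).erase s) ≤ v j (A i) := by
      have := (hbin j).2 ((A i).erase s) s (Finset.notMem_erase s _)
      rw [Finset.insert_erase hsA] at this
      omega
    have h3 := hEFX j i s hsA
    have h4 := hsource j
    omega
end

section
/- The update rule U_1 preserves EFX: let (A_1,…,A_n,P) be a partial EFX allocation, g ∈ P, s a source agent, and S ⊆ A_s ∪ {g} a safe bundle (no agent strongly envies S, and some agent a envies S with v_a(S) > v_a(A_a)). If the bundles are permuted along a cycle ending at s where each agent values the bundle she receives at least as much as her own, with agent a receiving S, then the resulting partial allocation (with A_s ∪ {g} \ S returned to the pool) is EFX. -/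
open Finset

/-- the update rule `U₁` preserves EFX.  If `S ⊆ A s ∪ {g}` is a safe
bundle (nobody strongly envies `S`, and agent `a` envies `S`), and the new allocation
gives `S` to `a` while every other agent receives some old bundle that she values at
least as much as her own, then the new (partial) allocation is EFX. -/
theorem update_rule_U1_preserves_efx {α : Type*} [DecidableEq α] (n : ℕ)
    (v : Fin n → Finset α → ℕ)
    (hnorm : ∀ i, v i ∅ = 0)
    (hmono : ∀ i, ∀ T S' : Finset α, T ⊆ S' → v i T ≤ v i S')
    (A A' : Fin n → Finset α)
    (hEFX : ∀ i j : Fin n, ∀ g' ∈ A j, v i ((A j).erase g') ≤ v i (A i))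
    (s : Fin n)
    (hsource : ∀ j : Fin n, ¬ v j (A j) < v j (A s))
    (g : α) (hg : ∀ j : Fin n, g ∉ A j)
    (S : Finset α) (hS : S ⊆ insert g (A s))
    (hsafe : ∀ j : Fin n, ∀ x ∈ S, v j (S.erase x) ≤ v j (A j))
    (a : Fin n) (ha : v a (A a) < v a S)
    (hA'a : A' a = S)
    (hA' : ∀ i : Fin n, i ≠ a → ∃ j : Fin n, A' i = A j ∧ v i (A i) ≤ v i (A' i)) :
    ∀ i j : Fin n, ∀ g' ∈ A' j, v i ((A' j).erase g') ≤ v i (A' i) := by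
  intro i j g' hg'
  have hiA : v i (A i) ≤ v i (A' i) := by
    by_cases hia : i = a
    · subst hia; rw [hA'a]; exact ha.le
    · exact (hA' i hia).choose_spec.2
  by_cases hja : j = a
  · subst hja
    rw [hA'a] at hg' ⊢
    exact le_trans (hsafe i g' hg') hiA
  · obtain ⟨k, hk, -⟩ := hA' j hja
    rw [hk] at hg' ⊢
    exact le_trans (hEFX i k g' hg') hiA
end

section
/- There exist binary valuations for which every allocation maximizing Nash social welfare fails to be EFX. Concretely, with n = 2 agents and m = 4 items, v_1(S) = 1 if |S| ≥ 3 and 0 otherwise, and v_2(S) = |S|: every allocation with positive Nash welfare gives agent 1 at least 3 items and agent 2 at most 1 item, and any such allocation is not EFX for agent 2. -/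
open Finset

/-- with two agents on four items, where
`v₁ S = 1` iff `|S| ≥ 3` (else `0`) and `v₂ S = |S|`, every allocation with positive
Nash social welfare gives agent 1 at least 3 items and agent 2 at most 1 item, and
is not EFX for agent 2. -/
theorem nash_welfare_max_not_efx
    (A₁ A₂ : Finset (Fin 4))
    (hdisj : Disjoint A₁ A₂)
    (hcover : A₁ ∪ A₂ = Finset.univ)
    (hnash : 0 < (if 3 ≤ A₁.card then 1 else 0) * A₂.card) :
    3 ≤ A₁.card ∧ A₂.card ≤ 1 ∧
      ∃ g ∈ A₁, A₂.card < (A₁.erase g).card := by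
  have hsum : A₁.card + A₂.card = 4 := by
    rw [← Finset.card_union_of_disjoint hdisj, hcover]
    simp
  by_cases h3 : 3 ≤ A₁.card
  · have h2pos : 0 < A₂.card := by simpa [h3] using hnash
    have h13 : A₁.card = 3 := by omega
    have h21 : A₂.card = 1 := by omega
    refine ⟨h3, by omega, ?_⟩
    obtain ⟨g, hg⟩ := Finset.card_pos.mp (show 0 < A₁.card by omega)
    exact ⟨g, hg, by rw [Finset.card_erase_of_mem hg]; omega⟩
  · simp [h3] at hnash
end

section
/- For any number of agents with binary valuations over a finite set of indivisible items, a complete EFX allocation always exists. -/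
/-!
Take a partial EFX allocation maximizing the pair (utilitarian welfare, number of allocated
items) lexicographically; an unallocated item `p` would allow to increase it. If some bundle
`A l ∪ {p}` has no subset that anybody strictly prefers to their own bundle, give `p` to `l`.
Otherwise pick, for every `l`, an inclusion-minimal envied subset `S l` of `A l ∪ {p}` and an
agent `e l` envying it. Along the cycles of `e`, agent `e l` takes `S l`; all of these sets but
one drop `p`, which with binary marginals costs at most the one unit gained by envy, and the one
that keeps `p` gives a strict welfare gain. Minimality of the `S l` keeps the allocation EFX.
-/

open Finset Function

section

variable {α ι : Type*}

def HasBinaryMarginals [DecidableEq α] (M : Finset α) (u : Finset α → ℕ) : Prop :=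
  ∀ S ⊆ M, ∀ g ∈ M, g ∉ S → u (insert g S) = u S ∨ u (insert g S) = u S + 1

namespace HasBinaryMarginals

variable [DecidableEq α] {M S T : Finset α} {u : Finset α → ℕ}

lemma le_insert (hu : HasBinaryMarginals M u) (hS : S ⊆ M) {g : α} (hg : g ∈ M) :
    u S ≤ u (insert g S) := by
  by_cases hgS : g ∈ S
  · rw [insert_eq_of_mem hgS]
  · rcases hu S hS g hg hgS with h | h <;> omega

lemma le_erase_add_one (hu : HasBinaryMarginals M u) (hT : T ⊆ M) (g : α) :
    u T ≤ u (T.erase g) + 1 := by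
  by_cases hgT : g ∈ T
  · have h := hu (T.erase g) ((erase_subset g T).trans hT) g (hT hgT) (notMem_erase g T)
    rw [insert_erase hgT] at h
    omega
  · rw [erase_eq_of_notMem hgT]
    omega

end HasBinaryMarginals

lemma Function.nonempty_periodicPts [Finite α] [Nonempty α] (f : α → α) :
    (periodicPts f).Nonempty := by
  obtain ⟨i, j, hij, h⟩ := Set.finite_univ.exists_lt_map_eq_of_forall_mem
    (f := fun k => f^[k] (Classical.arbitrary α)) fun _ => Set.mem_univ _
  refine ⟨f^[i] (Classical.arbitrary α), mk_mem_periodicPts (Nat.sub_pos_of_lt hij) ?_⟩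
  change f^[j - i] (f^[i] _) = _
  rw [← iterate_add_apply, Nat.sub_add_cancel hij.le]
  exact h.symm

lemma exists_perm_eq_or_fixed [Finite α] [Nonempty α] (f : α → α) :
    ∃ σ : Equiv.Perm α, ∃ c, σ c = f c ∧ ∀ x, σ x = f x ∨ σ x = x := by
  classical
  obtain ⟨c, hc⟩ := nonempty_periodicPts f
  let σ := Equiv.Perm.ofSubtype ((bijOn_periodicPts f).equiv f)
  have hσ : ∀ x ∈ periodicPts f, σ x = f x := fun x hx =>
    Equiv.Perm.ofSubtype_apply_of_mem _ hx
  refine ⟨σ, c, hσ c hc, fun x => ?_⟩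
  by_cases hx : x ∈ periodicPts f
  · exact .inl (hσ x hx)
  · exact .inr (Equiv.Perm.ofSubtype_apply_of_not_mem _ hx)

lemma pairwise_disjoint_of_subset_insert {A T : ι → Finset α} [DecidableEq α] {p : α}
    (hA : Pairwise (Disjoint on A)) (hT : ∀ l, T l ⊆ insert p (A l))
    (hp : ∀ i j, p ∈ T i → p ∈ T j → i = j) : Pairwise (Disjoint on T) := by
  intro i j hij
  rw [onFun, disjoint_left]
  intro x hxi hxj
  rcases mem_insert.mp (hT i hxi) with rfl | hxi'
  · exact hij (hp i j hxi hxj)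
  rcases mem_insert.mp (hT j hxj) with rfl | hxj'
  · exact hij (hp i j hxi hxj)
  exact disjoint_left.mp (hA hij) hxi' hxj'

section Allocation

variable [DecidableEq α] (M : Finset α) (v : ι → Finset α → ℕ)

structure IsPartialEFX (A : ι → Finset α) : Prop where
  subset : ∀ i, A i ⊆ M
  disjoint : Pairwise (Disjoint on A)
  efx : ∀ i j, ∀ g ∈ A j, v i ((A j).erase g) ≤ v i (A i)

def IsEnvied (A : ι → Finset α) (T : Finset α) : Prop :=
  ∃ k, v k (A k) < v k T

def welfare [Fintype ι] (A : ι → Finset α) : ℕ :=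
  ∑ i, v i (A i)

def potential [Fintype ι] (A : ι → Finset α) : ℕ ×ₗ ℕ :=
  toLex (welfare v A, #(univ.biUnion A))

variable {M v}

lemma IsPartialEFX.of_le {A B : ι → Finset α} (hBM : ∀ i, B i ⊆ M)
    (hB : Pairwise (Disjoint on B)) (hle : ∀ i, v i (A i) ≤ v i (B i))
    (hefx : ∀ i j, ∀ g ∈ B j, v i ((B j).erase g) ≤ v i (A i)) : IsPartialEFX M v B :=
  ⟨hBM, hB, fun i j g hg => (hefx i j g hg).trans (hle i)⟩

lemma erase_le_of_forall_ssubset_not_isEnvied {A : ι → Finset α} {S X : Finset α}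
    (hX : ∀ T ⊂ X, ¬IsEnvied v A T) (hS : S ⊆ X) {g : α} (hg : g ∈ S) (i : ι) :
    v i (S.erase g) ≤ v i (A i) :=
  not_lt.mp fun h => hX _ ((erase_ssubset hg).trans_subset hS) ⟨i, h⟩

variable [Fintype ι]

lemma potential_lt_of_welfare_lt {A B : ι → Finset α} (h : welfare v A < welfare v B) :
    potential v A < potential v B :=
  Prod.Lex.toLex_lt_toLex.2 (.inl h)

lemma potential_lt_of_welfare_le_of_ssubset {A B : ι → Finset α}
    (hw : welfare v A ≤ welfare v B) (h : univ.biUnion A ⊂ univ.biUnion B) :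
    potential v A < potential v B :=
  Prod.Lex.toLex_strictMono (Prod.mk_lt_mk_of_le_of_lt hw (card_lt_card h))

variable {A : ι → Finset α} {p : α}

lemma exists_potential_lt_of_perm (σ : Equiv.Perm ι) {T : ι → Finset α}
    (hTM : ∀ l, T l ⊆ M) (hT : Pairwise (Disjoint on T))
    (hle : ∀ l, v (σ l) (A (σ l)) ≤ v (σ l) (T l)) {c : ι}
    (hlt : v (σ c) (A (σ c)) < v (σ c) (T c))
    (hefx : ∀ l, ∀ g ∈ T l, ∀ i, v i ((T l).erase g) ≤ v i (A i)) :
    ∃ B, IsPartialEFX M v B ∧ potential v A < potential v B := by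
  refine ⟨T ∘ σ.symm, .of_le (fun k => hTM _) (hT.comp_of_injective σ.symm.injective)
    (fun k => by simpa using hle (σ.symm k)) (fun i k g hg => hefx _ g hg i), ?_⟩
  apply potential_lt_of_welfare_lt
  calc welfare v A = ∑ l, v (σ l) (A (σ l)) := (Equiv.sum_comp σ fun k => v k (A k)).symm
    _ < ∑ l, v (σ l) (T l) := sum_lt_sum (fun l _ => hle l) ⟨c, mem_univ c, hlt⟩
    _ = welfare v (T ∘ σ.symm) := by
      simpa [welfare] using Equiv.sum_comp σ fun k => v k (T (σ.symm k))

lemma IsPartialEFX.exists_potential_lt_of_insert (hv : ∀ i, HasBinaryMarginals M (v i))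
    (hA : IsPartialEFX M v A) (hpM : p ∈ M) (hp : ∀ k, p ∉ A k) {l : ι}
    (hl : ∀ T ⊆ insert p (A l), ¬IsEnvied v A T) :
    ∃ B, IsPartialEFX M v B ∧ potential v A < potential v B := by
  classical
  let B : ι → Finset α := fun k => if k = l then insert p (A k) else A k
  have hAB : ∀ k, A k ⊆ B k := fun k => by simp only [B]; split_ifs <;> simp [subset_insert]
  have hBA : ∀ k, B k ⊆ insert p (A k) := fun k => by
    simp only [B]; split_ifs <;> simp [subset_insert]
  have hle : ∀ i, v i (A i) ≤ v i (B i) := fun i => by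
    simp only [B]
    split_ifs
    · exact (hv i).le_insert (hA.subset i) hpM
    · rfl
  have hpB : ∀ k, p ∈ B k → k = l := fun k hk => by
    by_contra hkl
    simp only [B, if_neg hkl] at hk
    exact hp k hk
  have hdisj : Pairwise (Disjoint on B) := pairwise_disjoint_of_subset_insert hA.disjoint hBA
    fun i j hi hj => (hpB i hi).trans (hpB j hj).symm
  have hefx : ∀ i j, ∀ g ∈ B j, v i ((B j).erase g) ≤ v i (A i) := fun i j g hg => by
    by_cases hjl : j = l
    · subst hjl
      exact erase_le_of_forall_ssubset_not_isEnvied (fun T hT => hl T hT.subset) (hBA j) hg i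
    · simp only [B, if_neg hjl] at hg ⊢
      exact hA.efx i j g hg
  have hgrow : univ.biUnion A ⊂ univ.biUnion B := by
    refine (ssubset_iff_of_subset (biUnion_mono fun k _ => hAB k)).2
      ⟨p, mem_biUnion.2 ⟨l, mem_univ l, by simp [B]⟩, ?_⟩
    simpa [mem_biUnion] using hp
  exact ⟨B, .of_le (fun k => (hBA k).trans (insert_subset hpM (hA.subset k))) hdisj hle hefx,
    potential_lt_of_welfare_le_of_ssubset (sum_le_sum fun i _ => hle i) hgrow⟩

lemma IsPartialEFX.exists_potential_lt_of_rotation [Nonempty ι]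
    (hv : ∀ i, HasBinaryMarginals M (v i)) (hA : IsPartialEFX M v A) (hpM : p ∈ M)
    (hp : ∀ k, p ∉ A k) {S : ι → Finset α} (hS : ∀ l, S l ⊆ insert p (A l))
    (hSmin : ∀ l, Minimal (IsEnvied v A) (S l)) :
    ∃ B, IsPartialEFX M v B ∧ potential v A < potential v B := by
  classical
  choose e he using fun l => (hSmin l).prop
  obtain ⟨σ, c, hσc, hσ⟩ := exists_perm_eq_or_fixed e
  let T : ι → Finset α := fun l =>
    if l = c then S l else if σ l = e l then (S l).erase p else A l
  have hTS : ∀ l, σ l = e l → T l ⊆ S l := fun l _ => by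
    simp only [T]; split_ifs <;> simp [erase_subset]
  have hTA : ∀ l, σ l ≠ e l → T l = A l := fun l hl => by
    have hlc : l ≠ c := fun h => hl (h ▸ hσc)
    simp only [T, if_neg hlc, if_neg hl]
  have hTsub : ∀ l, T l ⊆ insert p (A l) := fun l => by
    by_cases hl : σ l = e l
    · exact (hTS l hl).trans (hS l)
    · rw [hTA l hl]; exact subset_insert p (A l)
  have hTp : ∀ l, p ∈ T l → l = c := fun l hpl => by
    by_contra hlc
    simp only [T, if_neg hlc] at hpl
    split_ifs at hpl
    · exact notMem_erase p _ hpl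
    · exact hp l hpl
  have hTM : ∀ l, T l ⊆ M := fun l => (hTsub l).trans (insert_subset hpM (hA.subset l))
  have hTle : ∀ l, v (σ l) (A (σ l)) ≤ v (σ l) (T l) := fun l => by
    by_cases hl : σ l = e l
    · rw [hl]
      have henvy := he l
      -- dropping `p` costs at most the unit by which `e l` strictly prefers `S l`
      have herase :=
        (hv (e l)).le_erase_add_one ((hS l).trans (insert_subset hpM (hA.subset l))) p
      by_cases hlc : l = c
      · simp only [T, if_pos hlc]; omega
      · simp only [T, if_neg hlc, if_pos hl]; omega
    · rw [hTA l hl, (hσ l).resolve_left hl]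
  have hTefx : ∀ l, ∀ g ∈ T l, ∀ i, v i ((T l).erase g) ≤ v i (A i) := fun l g hg i => by
    by_cases hl : σ l = e l
    · exact erase_le_of_forall_ssubset_not_isEnvied (fun T hT => (hSmin l).not_prop_of_lt hT)
        (hTS l hl) hg i
    · rw [hTA l hl] at hg ⊢
      exact hA.efx i l g hg
  refine exists_potential_lt_of_perm σ hTM (pairwise_disjoint_of_subset_insert hA.disjoint
    hTsub fun i j hi hj => (hTp i hi).trans (hTp j hj).symm) hTle (c := c) ?_ hTefx
  simpa [T, hσc] using he c

lemma IsPartialEFX.exists_potential_lt [Nonempty ι] (hv : ∀ i, HasBinaryMarginals M (v i))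
    (hA : IsPartialEFX M v A) (hpM : p ∈ M) (hp : ∀ k, p ∉ A k) :
    ∃ B, IsPartialEFX M v B ∧ potential v A < potential v B := by
  by_cases h : ∃ l, ∀ T ⊆ insert p (A l), ¬IsEnvied v A T
  · obtain ⟨l, hl⟩ := h
    exact hA.exists_potential_lt_of_insert hv hpM hp hl
  push Not at h
  have hS : ∀ l, ∃ S ⊆ insert p (A l), Minimal (IsEnvied v A) S := fun l => by
    obtain ⟨T, hT, hTenvied⟩ := h l
    obtain ⟨S, hST, hS⟩ := exists_minimal_le_of_wellFoundedLT _ T hTenvied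
    exact ⟨S, hST.trans hT, hS⟩
  choose S hS hSmin using hS
  exact hA.exists_potential_lt_of_rotation hv hpM hp hS hSmin

variable (M v) in
lemma exists_isPartialEFX_biUnion_eq [Nonempty ι] (hv : ∀ i, HasBinaryMarginals M (v i)) :
    ∃ A, IsPartialEFX M v A ∧ univ.biUnion A = M := by
  classical
  let candidates := (Fintype.piFinset fun _ : ι => M.powerset).filter (IsPartialEFX M v)
  have hmem : ∀ A, IsPartialEFX M v A → A ∈ candidates := fun A hA =>
    mem_filter.2 ⟨Fintype.mem_piFinset.2 fun i => mem_powerset.2 (hA.subset i), hA⟩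
  have hempty : IsPartialEFX M v fun _ => ∅ :=
    ⟨fun _ => empty_subset M, fun _ _ _ => disjoint_empty_left ∅, by simp⟩
  obtain ⟨A, hAc, hAmax⟩ := candidates.exists_max_image (potential v) ⟨_, hmem _ hempty⟩
  have hA := (mem_filter.1 hAc).2
  refine ⟨A, hA, (biUnion_subset.2 fun i _ => hA.subset i).antisymm fun p hpM => ?_⟩
  by_contra hp
  obtain ⟨B, hB, hlt⟩ :=
    hA.exists_potential_lt hv hpM fun k hk => hp (mem_biUnion.2 ⟨k, mem_univ k, hk⟩)
  exact (hAmax B (hmem B hB)).not_gt hlt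

end Allocation

end

/-- main theorem: for any number of agents with binary valuations over
a finite set of items, a complete EFX allocation exists. -/
theorem efx_allocation_exists_binary {α : Type*} [DecidableEq α]
    (n : ℕ) (hn : 0 < n) (M : Finset α)
    (v : Fin n → Finset α → ℕ)
    (hbin : ∀ i : Fin n, v i ∅ = 0 ∧ ∀ S ⊆ M, ∀ g ∈ M, g ∉ S →
      v i (insert g S) = v i S ∨ v i (insert g S) = v i S + 1) :
    ∃ A : Fin n → Finset α,
      (∀ i j : Fin n, i ≠ j → Disjoint (A i) (A j)) ∧
      Finset.univ.biUnion A = M ∧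
      (∀ i j : Fin n, ∀ g ∈ A j, v i ((A j).erase g) ≤ v i (A i)) := by
  have : Nonempty (Fin n) := ⟨⟨0, hn⟩⟩
  obtain ⟨A, hA, hAM⟩ := exists_isPartialEFX_biUnion_eq M v fun i => (hbin i).2
  exact ⟨A, fun i j hij => hA.disjoint hij, hAM, hA.efx⟩
end
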